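/- Consider a two-sender instance over a finite field F with message parts P_1, P_2, P_{12}, side-information sets K_i, and eavesdropper set A with A_T = A ∩ P_T for T ∈ {1, 2, {1,2}}. Suppose for each T there is a matrix G_T ∈ F^{l_T×|P_T|} that is a valid index code for the sub-instance induced on P_T and is weakly secure against A_T. Then the (l_1+l_2+l_{12})×m matrix G obtained by placing G_1, G_2, G_{12} block-diagonally on the column groups P_1, P_2, P_{12} respectively (zeros elsewhere) is a valid weakly secure two-sender linear index code for the full instance against A, where sender 1 transmits the G_1-rows, sender 2 transmits the G_2-rows, and the G_{12}-rows may be transmitted by either sender. -/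

import Mathlib

/-!
Every receiver `i` lies in exactly one part `P_T`, and restricted to the columns `P_T` the
rows of the glued matrix are the rows of `G_T` or zero. So receiver `i` reads `G_T x|_{P_T}`
off the `G_T`-rows and decodes as in the sub-instance; and restriction to `P_T` maps the row
space of the glued matrix into that of `G_T`, turning a leak `u + e_i` of the whole code into a
leak `u|_{P_T} + e_i` of `G_T` with `u|_{P_T}` supported in `A_T`.
-/

open Matrix Sum

attribute [local instance] Classical.propDecidable

noncomputable section

variable (F : Type*) [Field F] [Fintype F]

/-- The row space of a matrix: the span of its rows. -/
def rowSpace {ρ ι : Type*} (G : Matrix ρ ι F) : Submodule F (ι → F) :=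
  Submodule.span F (Set.range fun r j => G r j)

/-- Weak security of the linear code `x ↦ G x` against an eavesdropper knowing `x j` for
`j ∈ A`: for every `i ∉ A` and every `u` supported in `A`, `u + e i` is not in the
row space of `G`. -/
def WeaklySecure {ρ ι : Type*} (G : Matrix ρ ι F) (A : Set ι) : Prop :=
  ∀ i ∉ A, ∀ u : ι → F, (∀ j, u j ≠ 0 → j ∈ A) →
    u + Pi.single i (1 : F) ∉ rowSpace F G

/-- `G` is a valid index code for side-information sets `K`: every receiver `i` can
decode `x i` from the codeword `G.mulVec x` and its side information `x|_{K i}`. -/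
def ValidCode {ρ ι : Type*} [Fintype ι] (K : ι → Set ι) (G : Matrix ρ ι F) : Prop :=
  ∀ i : ι, ∃ D : (ρ → F) → (↥(K i) → F) → F,
    ∀ x : ι → F, D (G.mulVec x) (fun j => x j.1) = x i

/-- `G` has two-sender form for the parts `P1`, `P2`: its rows split into sender-1 rows,
zero on all columns in `P2`, and sender-2 rows, zero on all columns in `P1`. -/
def TwoSenderForm {ρ ι : Type*} (P1 P2 : Set ι) (G : Matrix ρ ι F) : Prop :=
  ∃ S : Set ρ, (∀ r ∈ S, ∀ j ∈ P2, G r j = 0) ∧ (∀ r ∉ S, ∀ j ∈ P1, G r j = 0)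

/-- Achievable lengths of valid weakly secure (single-sender) linear index codes. -/
def oneLens {ι : Type*} [Fintype ι] (K : ι → Set ι) (A : Set ι) : Set ℕ :=
  {l | ∃ G : Matrix (Fin l) ι F, ValidCode F K G ∧ WeaklySecure F G A}

/-- Achievable total lengths of valid weakly secure two-sender linear index codes. -/
def twoLens {ι : Type*} [Fintype ι] (P1 P2 : Set ι) (K : ι → Set ι) (A : Set ι) :
    Set ℕ :=
  {l | ∃ G : Matrix (Fin l) ι F,
      TwoSenderForm F P1 P2 G ∧ ValidCode F K G ∧ WeaklySecure F G A}

/-- Side-information sets of the sub-instance induced on `S`. -/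
def subK {ι : Type*} (K : ι → Set ι) (S : Set ι) : ↥S → Set ↥S :=
  fun i => {j : ↥S | (j : ι) ∈ K (i : ι)}

/-- Extend a matrix with columns indexed by `↥S` to one with columns indexed by `ι`,
filling the new columns with zeros. -/
def extendCols {ρ ι : Type*} (S : Set ι) (G : Matrix ρ ↥S F) : Matrix ρ ι F :=
  Matrix.of fun r => Function.extend (Subtype.val) (G r) (fun _ => 0)

/-- Zero-pad a matrix with `l` rows to one with `L` rows. -/
def padMat {ι : Type*} (L : ℕ) {l : ℕ} (G : Matrix (Fin l) ι F) : Matrix (Fin L) ι F :=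
  Matrix.of fun r j => if h : (r : ℕ) < l then G ⟨(r : ℕ), h⟩ j else 0

/-- Glue three codes on column sets `S1`, `S2`, `S3` into a single matrix on all columns,
each block of rows supported only on its own column set. -/
def glueThree {ρ1 ρ2 ρ3 ι : Type*} (S1 S2 S3 : Set ι)
    (G1 : Matrix ρ1 ↥S1 F) (G2 : Matrix ρ2 ↥S2 F) (G3 : Matrix ρ3 ↥S3 F) :
    Matrix (ρ1 ⊕ ρ2 ⊕ ρ3) ι F :=
  Matrix.of (Sum.elim (fun r => extendCols F S1 G1 r)
    (Sum.elim (fun r => extendCols F S2 G2 r) (fun r => extendCols F S3 G3 r)))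

section

variable {𝕜 : Type*} [Field 𝕜] {ρ ρ' ι : Type*}

theorem row_mem_rowSpace (H : Matrix ρ ι 𝕜) (r : ρ) : H r ∈ rowSpace 𝕜 H :=
  Submodule.subset_span ⟨r, rfl⟩

theorem extendCols_apply_of_mem {S : Set ι} (H : Matrix ρ S 𝕜) (r : ρ) {j : ι} (hj : j ∈ S) :
    extendCols 𝕜 S H r j = H r ⟨j, hj⟩ :=
  Subtype.val_injective.extend_apply (H r) (fun _ => 0) ⟨j, hj⟩

theorem extendCols_apply_of_notMem {S : Set ι} (H : Matrix ρ S 𝕜) (r : ρ) {j : ι}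
    (hj : j ∉ S) : extendCols 𝕜 S H r j = 0 :=
  Function.extend_apply' (H r) (fun _ => 0) j fun ⟨a, ha⟩ => hj (ha ▸ a.2)

theorem extendCols_restrict_self {S : Set ι} (H : Matrix ρ S 𝕜) (r : ρ) :
    (fun a : S => extendCols 𝕜 S H r a) = H r :=
  funext fun a => extendCols_apply_of_mem H r a.2

theorem extendCols_restrict_of_disjoint {S T : Set ι} (hST : Disjoint S T)
    (H : Matrix ρ S 𝕜) (r : ρ) : (fun a : T => extendCols 𝕜 S H r a) = 0 :=
  funext fun a => extendCols_apply_of_notMem H r (Set.disjoint_right.mp hST a.2)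

theorem mulVec_extendCols [Fintype ι] (S : Set ι) (H : Matrix ρ S 𝕜) (x : ι → 𝕜) :
    extendCols 𝕜 S H *ᵥ x = H *ᵥ fun a => x a := by
  funext r
  simp only [mulVec, dotProduct]
  rw [← Fintype.sum_subtype_add_sum_subtype (· ∈ S),
    Fintype.sum_eq_zero (fun j : {j // j ∉ S} => extendCols 𝕜 S H r j * x j)
      fun j => by rw [extendCols_apply_of_notMem H r j.2, zero_mul], add_zero]
  exact Fintype.sum_congr _ _ fun a => by rw [extendCols_apply_of_mem H r a.2]

theorem restrict_mem_rowSpace {S : Set ι} {G : Matrix ρ ι 𝕜} {H : Matrix ρ' S 𝕜}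
    (hrows : ∀ r, (fun a : S => G r a) ∈ rowSpace 𝕜 H) {v : ι → 𝕜} (hv : v ∈ rowSpace 𝕜 G) :
    (fun a : S => v a) ∈ rowSpace 𝕜 H := by
  have hle : (rowSpace 𝕜 G).map (LinearMap.funLeft 𝕜 𝕜 Subtype.val) ≤ rowSpace 𝕜 H := by
    rw [rowSpace, Submodule.map_span, Submodule.span_le]
    rintro _ ⟨_, ⟨r, rfl⟩, rfl⟩
    exact hrows r
  exact hle (Submodule.mem_map_of_mem hv)

theorem add_single_notMem_rowSpace_of_restrict {S : Set ι} {G : Matrix ρ ι 𝕜}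
    {H : Matrix ρ' S 𝕜} {A : Set ι} (hrows : ∀ r, (fun a : S => G r a) ∈ rowSpace 𝕜 H)
    (hH : WeaklySecure 𝕜 H (Subtype.val ⁻¹' A)) {i : ι} (hiS : i ∈ S) (hiA : i ∉ A)
    {u : ι → 𝕜} (hu : ∀ j, u j ≠ 0 → j ∈ A) : u + Pi.single i 1 ∉ rowSpace 𝕜 G := by
  intro hmem
  refine hH ⟨i, hiS⟩ hiA (fun a => u a) (fun a ha => hu a ha) ?_
  convert restrict_mem_rowSpace hrows hmem using 1
  funext a
  simp [Pi.single_apply, Subtype.ext_iff]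

theorem exists_decoder_of_rowBlock [Fintype ι] {K : ι → Set ι} {S : Set ι}
    {G : Matrix ρ ι 𝕜} {H : Matrix ρ' S 𝕜} (e : ρ' → ρ)
    (he : ∀ r, G (e r) = extendCols 𝕜 S H r) (hH : ValidCode 𝕜 (subK K S) H) {i : ι}
    (hi : i ∈ S) : ∃ D : (ρ → 𝕜) → (K i → 𝕜) → 𝕜, ∀ x, D (G *ᵥ x) (fun j => x j) = x i := by
  obtain ⟨D, hD⟩ := hH ⟨i, hi⟩
  refine ⟨fun y s => D (y ∘ e) (fun j => s ⟨j.1, j.2⟩), fun x => ?_⟩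
  have hblock : (G *ᵥ x) ∘ e = H *ᵥ fun a => x a :=
    funext fun r => by rw [← mulVec_extendCols]; exact congrArg (· ⬝ᵥ x) (he r)
  simpa only [hblock] using hD fun a => x a

theorem twoSenderForm_of_rowBlocks {ρ₁ ρ₂ ρ₃ : Type*} {P₁ P₂ : Set ι}
    (G : Matrix (ρ₁ ⊕ ρ₂ ⊕ ρ₃) ι 𝕜) (h₁ : ∀ r, ∀ j ∈ P₂, G (inl r) j = 0)
    (h₂ : ∀ r, ∀ j ∈ P₁, G (inr (inl r)) j = 0) (h₃ : ∀ r, ∀ j ∈ P₂, G (inr (inr r)) j = 0) :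
    TwoSenderForm 𝕜 P₁ P₂ G := by
  refine ⟨(Set.range (inr ∘ inl))ᶜ, ?_, ?_⟩
  · rintro (r | r | r) hr
    · exact h₁ r
    · exact absurd ⟨r, rfl⟩ hr
    · exact h₃ r
  · intro r hr
    obtain ⟨r, rfl⟩ := not_not.mp hr
    exact h₂ r

end

section glueThree

variable {𝕜 : Type*} [Field 𝕜] {ρ₁ ρ₂ ρ₃ ι : Type*} {S₁ S₂ S₃ : Set ι}
  (G₁ : Matrix ρ₁ S₁ 𝕜) (G₂ : Matrix ρ₂ S₂ 𝕜) (G₃ : Matrix ρ₃ S₃ 𝕜)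

theorem glueThree_restrict₁_mem_rowSpace (h₁₂ : Disjoint S₁ S₂) (h₁₃ : Disjoint S₁ S₃)
    (r : ρ₁ ⊕ ρ₂ ⊕ ρ₃) : (fun a : S₁ => glueThree 𝕜 S₁ S₂ S₃ G₁ G₂ G₃ r a) ∈ rowSpace 𝕜 G₁ := by
  rcases r with r | r | r
  · exact (extendCols_restrict_self G₁ r).symm ▸ row_mem_rowSpace G₁ r
  · exact (extendCols_restrict_of_disjoint h₁₂.symm G₂ r).symm ▸ zero_mem _
  · exact (extendCols_restrict_of_disjoint h₁₃.symm G₃ r).symm ▸ zero_mem _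

theorem glueThree_restrict₂_mem_rowSpace (h₁₂ : Disjoint S₁ S₂) (h₂₃ : Disjoint S₂ S₃)
    (r : ρ₁ ⊕ ρ₂ ⊕ ρ₃) : (fun a : S₂ => glueThree 𝕜 S₁ S₂ S₃ G₁ G₂ G₃ r a) ∈ rowSpace 𝕜 G₂ := by
  rcases r with r | r | r
  · exact (extendCols_restrict_of_disjoint h₁₂ G₁ r).symm ▸ zero_mem _
  · exact (extendCols_restrict_self G₂ r).symm ▸ row_mem_rowSpace G₂ r
  · exact (extendCols_restrict_of_disjoint h₂₃.symm G₃ r).symm ▸ zero_mem _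

theorem glueThree_restrict₃_mem_rowSpace (h₁₃ : Disjoint S₁ S₃) (h₂₃ : Disjoint S₂ S₃)
    (r : ρ₁ ⊕ ρ₂ ⊕ ρ₃) : (fun a : S₃ => glueThree 𝕜 S₁ S₂ S₃ G₁ G₂ G₃ r a) ∈ rowSpace 𝕜 G₃ := by
  rcases r with r | r | r
  · exact (extendCols_restrict_of_disjoint h₁₃ G₁ r).symm ▸ zero_mem _
  · exact (extendCols_restrict_of_disjoint h₂₃ G₂ r).symm ▸ zero_mem _
  · exact (extendCols_restrict_self G₃ r).symm ▸ row_mem_rowSpace G₃ r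

theorem validCode_glueThree [Fintype ι] {K : ι → Set ι} (hcov : S₁ ∪ S₂ ∪ S₃ = Set.univ)
    (h₁ : ValidCode 𝕜 (subK K S₁) G₁) (h₂ : ValidCode 𝕜 (subK K S₂) G₂)
    (h₃ : ValidCode 𝕜 (subK K S₃) G₃) : ValidCode 𝕜 K (glueThree 𝕜 S₁ S₂ S₃ G₁ G₂ G₃) := by
  intro i
  have hi : i ∈ S₁ ∪ S₂ ∪ S₃ := hcov ▸ Set.mem_univ i
  rcases hi with (hi | hi) | hi
  · exact exists_decoder_of_rowBlock inl (fun _ => rfl) h₁ hi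
  · exact exists_decoder_of_rowBlock (inr ∘ inl) (fun _ => rfl) h₂ hi
  · exact exists_decoder_of_rowBlock (inr ∘ inr) (fun _ => rfl) h₃ hi

theorem weaklySecure_glueThree {A : Set ι} (h₁₂ : Disjoint S₁ S₂) (h₁₃ : Disjoint S₁ S₃)
    (h₂₃ : Disjoint S₂ S₃) (hcov : S₁ ∪ S₂ ∪ S₃ = Set.univ)
    (h₁ : WeaklySecure 𝕜 G₁ (Subtype.val ⁻¹' A)) (h₂ : WeaklySecure 𝕜 G₂ (Subtype.val ⁻¹' A))
    (h₃ : WeaklySecure 𝕜 G₃ (Subtype.val ⁻¹' A)) :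
    WeaklySecure 𝕜 (glueThree 𝕜 S₁ S₂ S₃ G₁ G₂ G₃) A := by
  intro i hiA u hu
  have hi : i ∈ S₁ ∪ S₂ ∪ S₃ := hcov ▸ Set.mem_univ i
  rcases hi with (hi | hi) | hi
  · exact add_single_notMem_rowSpace_of_restrict
      (glueThree_restrict₁_mem_rowSpace G₁ G₂ G₃ h₁₂ h₁₃) h₁ hi hiA hu
  · exact add_single_notMem_rowSpace_of_restrict
      (glueThree_restrict₂_mem_rowSpace G₁ G₂ G₃ h₁₂ h₂₃) h₂ hi hiA hu
  · exact add_single_notMem_rowSpace_of_restrict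
      (glueThree_restrict₃_mem_rowSpace G₁ G₂ G₃ h₁₃ h₂₃) h₃ hi hiA hu

end glueThree

theorem glueThree_validCode_and_weaklySecure {m l1 l2 l12 : ℕ}
    (P1 P2 P12 : Set (Fin m))
    (h12 : Disjoint P1 P2) (h112 : Disjoint P1 P12) (h212 : Disjoint P2 P12)
    (hcov : P1 ∪ P2 ∪ P12 = Set.univ)
    (K : Fin m → Set (Fin m))
    (A : Set (Fin m))
    (G1 : Matrix (Fin l1) ↥P1 F) (G2 : Matrix (Fin l2) ↥P2 F)
    (G12 : Matrix (Fin l12) ↥P12 F)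
    (hG1v : ValidCode F (subK K P1) G1)
    (hG1s : WeaklySecure F G1 (Subtype.val ⁻¹' A))
    (hG2v : ValidCode F (subK K P2) G2)
    (hG2s : WeaklySecure F G2 (Subtype.val ⁻¹' A))
    (hG12v : ValidCode F (subK K P12) G12)
    (hG12s : WeaklySecure F G12 (Subtype.val ⁻¹' A)) :
    (∀ r : Fin l1, ∀ j ∈ P2, glueThree F P1 P2 P12 G1 G2 G12 (Sum.inl r) j = 0) ∧
    (∀ r : Fin l2, ∀ j ∈ P1,
      glueThree F P1 P2 P12 G1 G2 G12 (Sum.inr (Sum.inl r)) j = 0) ∧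
    (∀ r : Fin l12, ∀ j ∈ P1 ∪ P2,
      glueThree F P1 P2 P12 G1 G2 G12 (Sum.inr (Sum.inr r)) j = 0) ∧
    TwoSenderForm F P1 P2 (glueThree F P1 P2 P12 G1 G2 G12) ∧
    ValidCode F K (glueThree F P1 P2 P12 G1 G2 G12) ∧
    WeaklySecure F (glueThree F P1 P2 P12 G1 G2 G12) A := by
  have hrow₁ : ∀ r : Fin l1, ∀ j ∈ P2, glueThree F P1 P2 P12 G1 G2 G12 (inl r) j = 0 :=
    fun r j hj => extendCols_apply_of_notMem G1 r (Set.disjoint_right.mp h12 hj)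
  have hrow₂ : ∀ r : Fin l2, ∀ j ∈ P1, glueThree F P1 P2 P12 G1 G2 G12 (inr (inl r)) j = 0 :=
    fun r j hj => extendCols_apply_of_notMem G2 r (Set.disjoint_left.mp h12 hj)
  have hrow₁₂ : ∀ r : Fin l12, ∀ j ∈ P1 ∪ P2,
      glueThree F P1 P2 P12 G1 G2 G12 (inr (inr r)) j = 0 :=
    fun r j hj => extendCols_apply_of_notMem G12 r
      (Set.disjoint_left.mp (Set.disjoint_union_left.mpr ⟨h112, h212⟩) hj)
  exact ⟨hrow₁, hrow₂, hrow₁₂,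
    twoSenderForm_of_rowBlocks _ hrow₁ hrow₂ fun r j hj => hrow₁₂ r j (Or.inr hj),
    validCode_glueThree G1 G2 G12 hcov hG1v hG2v hG12v,
    weaklySecure_glueThree G1 G2 G12 h12 h112 h212 hcov hG1s hG2s hG12s⟩
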